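/- arXiv:2305.16891 — 2 statements merged into one kernel-verified Lean document; each statement's English description precedes it below -/
import Mathlib

section
/- Let $\ell(W;z) = \frac{1}{2}(f_W(x) - y)^2$ where $f_W(x) = m^{-c}\sum_{k=1}^m a_k \sigma(\langle w_k,x\rangle)$, $a_k \in \{-1,1\}$, $|\sigma(a)| \le B_\sigma$, $|\sigma'(a)| \le B_{\sigma'}$, $|\sigma''(a)| \le B_{\sigma''}$, $\|x\| \le c_x$, $|y| \le c_y$. Then the largest eigenvalue of the Hessian $\nabla_W^2 \ell(W;z)$ is at most $c_x^2\big( \frac{B_{\sigma'}^2 + B_\sigma B_{\sigma''}}{m^{2c-1}} + \frac{B_{\sigma''} c_y}{m^c}\big)$ for every $W$. -/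
open scoped InnerProductSpace

/-! The loss is `½ φ²` with `φ(W) = f_W(x) - y`, so its Hessian form is
`(Dφ v)² + φ · D²φ (v, v)`. As `f_W` is a sum of ridge functions `σ ⟪w_k, x⟫` with weights
`± m^{-c}`, both `Dφ v` and `D²φ (v, v)` are weighted sums over the neurons, of
`σ' · ⟪v_k, x⟫` and `σ'' · ⟪v_k, x⟫²` respectively. Cauchy–Schwarz on the first costs a
factor `m`, `|φ| ≤ m^{1-c} B_σ + c_y`, and `Σ_k ⟪v_k, x⟫² ≤ c_x² ‖v‖²`. -/

section SquareLoss

variable {E : Type*} [NormedAddCommGroup E] [NormedSpace ℝ E]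

theorem iteratedFDeriv_two_half_sq_apply {φ : E → ℝ} {φ' : E → E →L[ℝ] ℝ}
    {φ'' : E →L[ℝ] E →L[ℝ] ℝ} {W : E} (hφ : ∀ V, HasFDerivAt φ (φ' V) V)
    (hφ' : HasFDerivAt φ' φ'' W) (v : E) :
    iteratedFDeriv ℝ 2 (fun V => (1 / 2) * φ V ^ 2) W ![v, v]
      = φ' W v ^ 2 + φ W * φ'' v v := by
  have hfderiv : fderiv ℝ (fun V => (1 / 2) * φ V ^ 2) = fun V => φ V • φ' V := by
    funext V
    refine ((((hφ V).pow 2).const_mul (1 / 2 : ℝ)).congr_fderiv ?_).fderiv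
    ext u
    simp only [smul_apply, smul_eq_mul, Nat.cast_ofNat, nsmul_eq_mul]
    ring
  rw [iteratedFDeriv_two_apply, hfderiv, ((hφ W).fun_smul hφ').fderiv]
  simp only [Matrix.cons_val_zero, Matrix.cons_val_one, add_apply, smul_apply,
    ContinuousLinearMap.smulRight_apply, smul_eq_mul]
  ring

end SquareLoss

section RidgeSum

variable {ι E F : Type*} [Fintype ι] [NormedAddCommGroup E] [NormedSpace ℝ E]
  [NormedAddCommGroup F] [NormedSpace ℝ F]

theorem hasFDerivAt_sum_comp_smul {τ : ℝ → ℝ} (hτ : Differentiable ℝ τ)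
    (L : ι → E →L[ℝ] ℝ) (b : ι → F) (V : E) :
    HasFDerivAt (fun U => ∑ k, τ (L k U) • b k)
      (∑ k, deriv τ (L k V) • (L k).smulRight (b k)) V := by
  refine HasFDerivAt.fun_sum fun k _ => ?_
  refine (((hτ _).hasDerivAt.comp_hasFDerivAt V (L k).hasFDerivAt).smul_const
    (b k)).congr_fderiv ?_
  ext u
  simp [smul_smul]

theorem iteratedFDeriv_two_half_sq_sum_comp_apply {σ : ℝ → ℝ} (hσ : ContDiff ℝ 2 σ)
    (L : ι → E →L[ℝ] ℝ) (w : ι → ℝ) (y : ℝ) (W v : E) :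
    iteratedFDeriv ℝ 2 (fun V => (1 / 2) * (∑ k, σ (L k V) * w k - y) ^ 2) W ![v, v]
      = (∑ k, deriv σ (L k W) * L k v * w k) ^ 2
        + (∑ k, σ (L k W) * w k - y) * ∑ k, deriv (deriv σ) (L k W) * L k v ^ 2 * w k := by
  have hφ := fun V =>
    (hasFDerivAt_sum_comp_smul (hσ.differentiable two_ne_zero) L w V).sub_const y
  have hφ' := hasFDerivAt_sum_comp_smul hσ.differentiable_deriv_two L
    (fun k => (L k).smulRight (w k)) W
  simp only [smul_eq_mul] at hφ
  rw [iteratedFDeriv_two_half_sq_apply hφ hφ']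
  simp only [sum_apply, smul_apply, ContinuousLinearMap.smulRight_apply, smul_eq_mul, sq,
    mul_assoc]

end RidgeSum

section WeightedSums

variable {ι : Type*} [Fintype ι] {w : ι → ℝ} {s : ℝ}

theorem abs_sum_mul_le_of_abs_le (hw : ∀ k, |w k| ≤ s) {u g : ι → ℝ}
    (hu : ∀ k, |u k| ≤ g k) : |∑ k, u k * w k| ≤ s * ∑ k, g k := by
  rw [Finset.mul_sum]
  refine (Finset.abs_sum_le_sum_abs _ _).trans (Finset.sum_le_sum fun k _ => ?_)
  rw [abs_mul, mul_comm s]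
  exact mul_le_mul (hu k) (hw k) (abs_nonneg _) ((abs_nonneg _).trans (hu k))

theorem abs_sum_mul_sub_le (hw : ∀ k, |w k| ≤ s) {p : ι → ℝ} {B : ℝ} (hp : ∀ k, |p k| ≤ B)
    {y cy : ℝ} (hy : |y| ≤ cy) :
    |∑ k, p k * w k - y| ≤ Fintype.card ι * s * B + cy := by
  have hsum := abs_sum_mul_le_of_abs_le hw hp
  simp only [Finset.sum_const, Finset.card_univ, nsmul_eq_mul] at hsum
  calc |∑ k, p k * w k - y| ≤ |∑ k, p k * w k| + |y| := abs_sub _ _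
    _ ≤ Fintype.card ι * s * B + cy := by linarith

theorem sq_sum_mul_le (hw : ∀ k, |w k| ≤ s) {q : ι → ℝ} {B : ℝ} (hq : ∀ k, |q k| ≤ B)
    (ℓ : ι → ℝ) :
    (∑ k, q k * ℓ k * w k) ^ 2 ≤ Fintype.card ι * (s * B) ^ 2 * ∑ k, ℓ k ^ 2 := by
  have habs : |∑ k, q k * ℓ k * w k| ≤ s * ∑ k, B * |ℓ k| :=
    abs_sum_mul_le_of_abs_le hw fun k => by
      rw [abs_mul]
      exact mul_le_mul_of_nonneg_right (hq k) (abs_nonneg _)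
  have hCS : (∑ k, |ℓ k|) ^ 2 ≤ Fintype.card ι * ∑ k, ℓ k ^ 2 := by
    simpa only [sq_abs, Finset.card_univ] using
      sq_sum_le_card_mul_sum_sq (s := Finset.univ) (f := fun k => |ℓ k|)
  calc (∑ k, q k * ℓ k * w k) ^ 2 ≤ (s * ∑ k, B * |ℓ k|) ^ 2 :=
        sq_le_sq.mpr (habs.trans (le_abs_self _))
    _ = (s * B) ^ 2 * (∑ k, |ℓ k|) ^ 2 := by rw [← Finset.mul_sum]; ring
    _ ≤ (s * B) ^ 2 * (Fintype.card ι * ∑ k, ℓ k ^ 2) := by gcongr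
    _ = Fintype.card ι * (s * B) ^ 2 * ∑ k, ℓ k ^ 2 := by ring

theorem abs_sum_mul_sq_mul_le (hw : ∀ k, |w k| ≤ s) {r : ι → ℝ} {B : ℝ}
    (hr : ∀ k, |r k| ≤ B) (ℓ : ι → ℝ) :
    |∑ k, r k * ℓ k ^ 2 * w k| ≤ s * B * ∑ k, ℓ k ^ 2 := by
  rw [mul_assoc, Finset.mul_sum]
  exact abs_sum_mul_le_of_abs_le hw fun k => by
    rw [abs_mul, abs_sq]
    exact mul_le_mul_of_nonneg_right (hr k) (sq_nonneg _)

theorem sq_sum_add_residual_mul_sum_le (hw : ∀ k, |w k| ≤ s) {p q r : ι → ℝ}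
    {Bσ B' B'' : ℝ} (hp : ∀ k, |p k| ≤ Bσ) (hq : ∀ k, |q k| ≤ B') (hr : ∀ k, |r k| ≤ B'')
    {y cy : ℝ} (hy : |y| ≤ cy) (ℓ : ι → ℝ) :
    (∑ k, q k * ℓ k * w k) ^ 2 + (∑ k, p k * w k - y) * ∑ k, r k * ℓ k ^ 2 * w k
      ≤ (Fintype.card ι * s ^ 2 * (B' ^ 2 + Bσ * B'') + s * B'' * cy) * ∑ k, ℓ k ^ 2 := by
  have hgrad := sq_sum_mul_le hw hq ℓ
  have hres := abs_sum_mul_sub_le hw hp hy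
  have hcurv := abs_sum_mul_sq_mul_le hw hr ℓ
  have hprod : (∑ k, p k * w k - y) * ∑ k, r k * ℓ k ^ 2 * w k
      ≤ (Fintype.card ι * s * Bσ + cy) * (s * B'' * ∑ k, ℓ k ^ 2) := by
    refine (le_abs_self _).trans ?_
    rw [abs_mul]
    exact mul_le_mul hres hcurv (abs_nonneg _) ((abs_nonneg _).trans hres)
  linarith

end WeightedSums

theorem sum_inner_sq_le {ι F : Type*} [Fintype ι] [NormedAddCommGroup F]
    [InnerProductSpace ℝ F] (v : PiLp 2 (fun _ : ι => F)) (x : F) :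
    ∑ k, ⟪v k, x⟫_ℝ ^ 2 ≤ ‖x‖ ^ 2 * ‖v‖ ^ 2 := by
  rw [PiLp.norm_sq_eq_of_L2, Finset.mul_sum]
  refine Finset.sum_le_sum fun k _ => ?_
  rw [← mul_pow, mul_comm, ← sq_abs]
  exact pow_le_pow_left₀ (abs_nonneg _) (abs_real_inner_le_norm _ _) 2

theorem mul_rpow_neg_sq {m : ℝ} (hm : 0 < m) (c : ℝ) :
    m * (m ^ (-c)) ^ 2 = (m ^ (2 * c - 1))⁻¹ := by
  rw [Real.rpow_sub hm, Real.rpow_one, Real.rpow_neg hm.le, two_mul, Real.rpow_add hm]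
  field_simp

theorem two_layer_loss_hessian_upper_bound_general {d m : ℕ} (hm : 0 < m)
    (c cx cy Bσ B' B'' : ℝ)
    (σ : ℝ → ℝ) (hσsmooth : ContDiff ℝ 2 σ)
    (hσ : ∀ t : ℝ, |σ t| ≤ Bσ) (hσ' : ∀ t : ℝ, |deriv σ t| ≤ B')
    (hσ'' : ∀ t : ℝ, |deriv (deriv σ) t| ≤ B'')
    (a : Fin m → ℝ) (ha : ∀ k, a k = 1 ∨ a k = -1)
    (x : EuclideanSpace ℝ (Fin d)) (hx : ‖x‖ ≤ cx)
    (y : ℝ) (hy : |y| ≤ cy)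
    (W : PiLp 2 (fun _ : Fin m => EuclideanSpace ℝ (Fin d))) :
    ∀ v : PiLp 2 (fun _ : Fin m => EuclideanSpace ℝ (Fin d)),
      iteratedFDeriv ℝ 2
          (fun V : PiLp 2 (fun _ : Fin m => EuclideanSpace ℝ (Fin d)) =>
            (1 / 2) * ((m : ℝ) ^ (-c) * ∑ k, a k * σ ⟪V k, x⟫_ℝ - y) ^ 2) W ![v, v]
        ≤ cx ^ 2 * ((B' ^ 2 + Bσ * B'') / (m : ℝ) ^ (2 * c - 1)
            + B'' * cy / (m : ℝ) ^ c) * ‖v‖ ^ 2 := by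
  intro v
  set s := (m : ℝ) ^ (-c) with hs_def
  set L : Fin m → PiLp 2 (fun _ : Fin m => EuclideanSpace ℝ (Fin d)) →L[ℝ] ℝ :=
    fun k => (innerSL ℝ x).comp (PiLp.proj 2 _ k)
  have hL : ∀ k V, L k V = ⟪V k, x⟫_ℝ := fun k V => by simp [L, real_inner_comm]
  have hs : 0 ≤ s := Real.rpow_nonneg m.cast_nonneg _
  have hw : ∀ k, |s * a k| ≤ s := fun k => by
    rcases ha k with h | h <;> simp [h, abs_of_nonneg hs]
  have hloss : (fun V => (1 / 2) * (s * ∑ k, a k * σ ⟪V k, x⟫_ℝ - y) ^ 2)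
      = fun V => (1 / 2) * (∑ k, σ (L k V) * (s * a k) - y) ^ 2 := by
    simp only [hL, Finset.mul_sum, mul_comm, mul_assoc, mul_left_comm]
  rw [hloss, iteratedFDeriv_two_half_sq_sum_comp_apply hσsmooth]
  have hBσ : 0 ≤ Bσ := (abs_nonneg _).trans (hσ 0)
  have hB'' : 0 ≤ B'' := (abs_nonneg _).trans (hσ'' 0)
  have hcy : 0 ≤ cy := (abs_nonneg _).trans hy
  calc _ ≤ (m * s ^ 2 * (B' ^ 2 + Bσ * B'') + s * B'' * cy) * ∑ k, L k v ^ 2 := by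
        simpa only [Fintype.card_fin] using
          sq_sum_add_residual_mul_sum_le hw (fun _ => hσ _) (fun _ => hσ' _) (fun _ => hσ'' _)
            hy _
    _ ≤ (m * s ^ 2 * (B' ^ 2 + Bσ * B'') + s * B'' * cy) * (cx ^ 2 * ‖v‖ ^ 2) := by
        gcongr
        simpa only [hL] using (sum_inner_sq_le v x).trans (by gcongr)
    _ = _ := by
      rw [mul_rpow_neg_sq (by exact_mod_cast hm), hs_def, Real.rpow_neg m.cast_nonneg]
      ring

/-- Smoothness bound for the square loss of a two-layer network: the largest
eigenvalue of the Hessian of `W ↦ ½(f_W(x) - y)²` is at most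
`c_x² ((B_{σ'}² + B_σ B_{σ''})/m^{2c-1} + B_{σ''} c_y / m^c)`, expressed via the
Hessian quadratic form. -/
theorem two_layer_loss_hessian_upper_bound {d m : ℕ} (hm : 0 < m)
    (c cx cy Bσ B' B'' : ℝ) (hc : c ∈ Set.Icc (1 / 2 : ℝ) 1)
    (σ : ℝ → ℝ) (hσsmooth : ContDiff ℝ 2 σ)
    (hσ : ∀ t : ℝ, |σ t| ≤ Bσ) (hσ' : ∀ t : ℝ, |deriv σ t| ≤ B')
    (hσ'' : ∀ t : ℝ, |deriv (deriv σ) t| ≤ B'')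
    (a : Fin m → ℝ) (ha : ∀ k, a k = 1 ∨ a k = -1)
    (x : EuclideanSpace ℝ (Fin d)) (hx : ‖x‖ ≤ cx)
    (y : ℝ) (hy : |y| ≤ cy)
    (W : PiLp 2 (fun _ : Fin m => EuclideanSpace ℝ (Fin d))) :
    ∀ v : PiLp 2 (fun _ : Fin m => EuclideanSpace ℝ (Fin d)),
      iteratedFDeriv ℝ 2
          (fun V : PiLp 2 (fun _ : Fin m => EuclideanSpace ℝ (Fin d)) =>
            (1 / 2) * ((m : ℝ) ^ (-c) * ∑ k, a k * σ ⟪V k, x⟫_ℝ - y) ^ 2) W ![v, v]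
        ≤ cx ^ 2 * ((B' ^ 2 + Bσ * B'') / (m : ℝ) ^ (2 * c - 1)
            + B'' * cy / (m : ℝ) ^ c) * ‖v‖ ^ 2 :=
  two_layer_loss_hessian_upper_bound_general hm c cx cy Bσ B' B'' σ hσsmooth hσ hσ' hσ'' a ha x hx y
    hy W
end

section
/- Let $\ell(W;z) = \frac{1}{2}(f_W(x)-y)^2$ with $f_W$ the two-layer network as above, and fix a reference point $W_0$ with $\ell(W_0;z) \le c_0$. Then for every $W$, the smallest eigenvalue of $\nabla_W^2 \ell(W;z)$ satisfies $\lambda_{\min}(\nabla^2 \ell(W;z)) \ge -\big( \frac{c_x^3 B_{\sigma'} B_{\sigma''}}{m^{2c - 1/2}} \|W - W_0\|_F + \frac{c_x^2 B_{\sigma''} \sqrt{2 c_0}}{m^c}\big)$. -/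
/-! The Hessian of `½ (f - y)²` is `∇f ∇fᵀ + (f - y) ∇²f`. The Gauss–Newton term `∇f ∇fᵀ` is
positive semidefinite, so only the residual term can be negative. For the two-layer network,
`∇²f_W(x)` acts on the `k`-th block as `m^{-c} a_k σ''(⟪w_k, x⟫) x xᵀ`, hence has size at most
`c_x² B_{σ''} / m^c`, and the residual `|f_W(x) - y|` is at most the Lipschitz bound
`c_x B_{σ'} m^{1/2 - c} ‖W - W₀‖` plus `√(2 c₀)`, the residual at `W₀`. -/

open scoped InnerProductSpace

theorem iteratedFDeriv_two_half_sq_sub_apply {E : Type*} [NormedAddCommGroup E]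
    [NormedSpace ℝ E] {g : E → ℝ} (hg : ContDiff ℝ 2 g) (y : ℝ) (W v : E) :
    iteratedFDeriv ℝ 2 (fun V => (1 / 2) * (g V - y) ^ 2) W ![v, v]
      = fderiv ℝ g W v ^ 2 + (g W - y) * iteratedFDeriv ℝ 2 g W ![v, v] := by
  have hg1 : Differentiable ℝ g := hg.differentiable (by norm_num)
  have hDg : Differentiable ℝ (fderiv ℝ g) :=
    (hg.fderiv_right (m := 1) le_rfl).differentiable (by norm_num)
  have hfderiv : fderiv ℝ (fun V => (1 / 2) * (g V - y) ^ 2)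
      = fun V => (g V - y) • fderiv ℝ g V := by
    ext V w
    have := (((hg1 V).hasFDerivAt.sub_const y).pow 2).const_mul (1 / 2 : ℝ)
    rw [this.fderiv]
    simp only [smul_apply, smul_eq_mul, nsmul_eq_mul]
    ring
  have hsecond := ((hg1 W).hasFDerivAt.sub_const y).fun_smul (hDg W).hasFDerivAt
  rw [iteratedFDeriv_two_apply, iteratedFDeriv_two_apply, hfderiv, hsecond.fderiv]
  simp only [Matrix.cons_val_zero, Matrix.cons_val_one, Matrix.cons_val_fin_one, add_apply,
    smul_apply, ContinuousLinearMap.smulRight_apply, smul_eq_mul]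
  ring

theorem iteratedFDeriv_two_comp_clm_apply {E : Type*} [NormedAddCommGroup E]
    [NormedSpace ℝ E] {φ : ℝ → ℝ} (hφ : ContDiff ℝ 2 φ) (L : E →L[ℝ] ℝ) (W v : E) :
    iteratedFDeriv ℝ 2 (fun V => φ (L V)) W ![v, v] = deriv (deriv φ) (L W) * L v ^ 2 := by
  rw [show (fun V => φ (L V)) = φ ∘ L from rfl, L.iteratedFDeriv_comp_right hφ W le_rfl,
    ContinuousMultilinearMap.compContinuousLinearMap_apply,
    iteratedFDeriv_apply_eq_iteratedDeriv_mul_prod, iteratedDeriv_eq_iterate]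
  simp [Fin.prod_univ_two, sq, mul_comm]

theorem PiLp.sum_norm_le_sqrt_card_mul_norm {ι : Type*} [Fintype ι] {β : ι → Type*}
    [∀ i, SeminormedAddCommGroup (β i)] (f : PiLp 2 β) :
    ∑ i, ‖f i‖ ≤ √(Fintype.card ι) * ‖f‖ := by
  have hCS : (∑ i, ‖f i‖) ^ 2 ≤ Fintype.card ι * ‖f‖ ^ 2 := by
    rw [PiLp.norm_sq_eq_of_L2]
    exact sq_sum_le_card_mul_sum_sq
  calc ∑ i, ‖f i‖ ≤ √(Fintype.card ι * ‖f‖ ^ 2) := le_of_abs_le (Real.abs_le_sqrt hCS)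
    _ = √(Fintype.card ι) * ‖f‖ := by
      rw [Real.sqrt_mul (by positivity), Real.sqrt_sq (norm_nonneg f)]

theorem abs_sub_le_of_abs_deriv_le {f : ℝ → ℝ} {C : ℝ} (hf : Differentiable ℝ f)
    (hC : ∀ t, |deriv f t| ≤ C) (s t : ℝ) : |f t - f s| ≤ C * |t - s| := by
  simpa [Real.norm_eq_abs] using Convex.norm_image_sub_le_of_norm_deriv_le (s := Set.univ)
      (fun z _ => hf z) (fun z _ => hC z) convex_univ (Set.mem_univ s) (Set.mem_univ t)

section TwoLayerNet

variable {E : Type*} [NormedAddCommGroup E] [InnerProductSpace ℝ E] {m : ℕ}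

noncomputable def twoLayerNet (c : ℝ) (σ : ℝ → ℝ) (a : Fin m → ℝ) (x : E)
    (W : PiLp 2 (fun _ : Fin m => E)) : ℝ :=
  (m : ℝ) ^ (-c) * ∑ k, a k * σ ⟪W k, x⟫_ℝ

noncomputable def innerAt (x : E) (k : Fin m) : PiLp 2 (fun _ : Fin m => E) →L[ℝ] ℝ :=
  (innerSL ℝ x).comp (PiLp.proj 2 _ k)

theorem innerAt_apply (x : E) (k : Fin m) (V : PiLp 2 (fun _ : Fin m => E)) :
    innerAt x k V = ⟪V k, x⟫_ℝ :=
  real_inner_comm _ _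

variable {c : ℝ} {σ : ℝ → ℝ} {a : Fin m → ℝ} {x : E}

theorem twoLayerNet_eq_sum_innerAt :
    twoLayerNet c σ a x = fun V => (m : ℝ) ^ (-c) • ∑ k, a k • σ (innerAt x k V) := by
  ext V
  simp only [twoLayerNet, innerAt_apply, smul_eq_mul]

theorem contDiff_twoLayerNet (hσ : ContDiff ℝ 2 σ) : ContDiff ℝ 2 (twoLayerNet c σ a x) := by
  rw [twoLayerNet_eq_sum_innerAt]
  exact ContDiff.const_smul _ (ContDiff.sum fun k _ =>
    (hσ.comp (innerAt x k).contDiff).const_smul (a k))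

theorem iteratedFDeriv_two_twoLayerNet_apply (hσ : ContDiff ℝ 2 σ)
    (W v : PiLp 2 (fun _ : Fin m => E)) :
    iteratedFDeriv ℝ 2 (twoLayerNet c σ a x) W ![v, v]
      = (m : ℝ) ^ (-c) * ∑ k, a k * deriv (deriv σ) ⟪W k, x⟫_ℝ * ⟪v k, x⟫_ℝ ^ 2 := by
  have hneuron (k : Fin m) : ContDiff ℝ 2 fun V => σ (innerAt x k V) :=
    hσ.comp (innerAt x k).contDiff
  rw [twoLayerNet_eq_sum_innerAt, iteratedFDeriv_const_smul_apply',
    iteratedFDeriv_fun_sum_apply fun k _ => ((hneuron k).const_smul (a k)).contDiffAt]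
  · rw [smul_apply, sum_apply, smul_eq_mul]
    congr 1
    refine Finset.sum_congr rfl fun k _ => ?_
    rw [iteratedFDeriv_const_smul_apply' (hneuron k).contDiffAt, smul_apply,
      iteratedFDeriv_two_comp_clm_apply hσ, innerAt_apply, innerAt_apply, smul_eq_mul, mul_assoc]
  · exact (ContDiff.sum fun k _ => (hneuron k).const_smul (a k)).contDiffAt

theorem abs_iteratedFDeriv_two_twoLayerNet_le {B'' cx : ℝ} (hσ : ContDiff ℝ 2 σ)
    (ha : ∀ k, |a k| ≤ 1) (hσ'' : ∀ t, |deriv (deriv σ) t| ≤ B'') (hx : ‖x‖ ≤ cx)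
    (W v : PiLp 2 (fun _ : Fin m => E)) :
    |iteratedFDeriv ℝ 2 (twoLayerNet c σ a x) W ![v, v]|
      ≤ cx ^ 2 * B'' / (m : ℝ) ^ c * ‖v‖ ^ 2 := by
  have hterm (k : Fin m) :
      |a k * deriv (deriv σ) ⟪W k, x⟫_ℝ * ⟪v k, x⟫_ℝ ^ 2| ≤ cx ^ 2 * B'' * ‖v k‖ ^ 2 := by
    have hinner : ⟪v k, x⟫_ℝ ^ 2 ≤ cx ^ 2 * ‖v k‖ ^ 2 := by
      rw [← sq_abs, ← mul_pow, mul_comm]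
      gcongr
      exact (abs_real_inner_le_norm _ _).trans (by gcongr)
    have hB'' : 0 ≤ B'' := (abs_nonneg _).trans (hσ'' 0)
    rw [abs_mul, abs_mul, abs_pow, sq_abs]
    calc |a k| * |deriv (deriv σ) ⟪W k, x⟫_ℝ| * ⟪v k, x⟫_ℝ ^ 2
        ≤ 1 * B'' * (cx ^ 2 * ‖v k‖ ^ 2) := by gcongr; exacts [ha k, hσ'' _]
      _ = cx ^ 2 * B'' * ‖v k‖ ^ 2 := by ring
  rw [iteratedFDeriv_two_twoLayerNet_apply hσ, abs_mul, Real.rpow_neg (Nat.cast_nonneg m),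
    abs_inv, abs_of_nonneg (by positivity), div_mul_eq_mul_div, div_eq_inv_mul,
    PiLp.norm_sq_eq_of_L2, Finset.mul_sum]
  gcongr
  exact (Finset.abs_sum_le_sum_abs _ _).trans (Finset.sum_le_sum fun k _ => hterm k)

theorem abs_twoLayerNet_sub_le {B' cx : ℝ} (hm : 0 < m) (hσ : Differentiable ℝ σ)
    (ha : ∀ k, |a k| ≤ 1) (hσ' : ∀ t, |deriv σ t| ≤ B') (hx : ‖x‖ ≤ cx)
    (W W0 : PiLp 2 (fun _ : Fin m => E)) :
    |twoLayerNet c σ a x W - twoLayerNet c σ a x W0|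
      ≤ cx * B' / (m : ℝ) ^ (c - 1 / 2) * ‖W - W0‖ := by
  have hB' : 0 ≤ B' := (abs_nonneg _).trans (hσ' 0)
  have hcx : 0 ≤ cx := (norm_nonneg x).trans hx
  have hm0 : (0 : ℝ) < m := Nat.cast_pos.mpr hm
  have hterm (k : Fin m) :
      |a k * σ ⟪W k, x⟫_ℝ - a k * σ ⟪W0 k, x⟫_ℝ| ≤ cx * B' * ‖(W - W0) k‖ := by
    rw [← mul_sub, abs_mul]
    calc |a k| * |σ ⟪W k, x⟫_ℝ - σ ⟪W0 k, x⟫_ℝ|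
        ≤ 1 * (B' * |⟪W k, x⟫_ℝ - ⟪W0 k, x⟫_ℝ|) := by
          gcongr
          exacts [ha k, abs_sub_le_of_abs_deriv_le hσ hσ' _ _]
      _ = B' * |⟪(W - W0) k, x⟫_ℝ| := by rw [one_mul, PiLp.sub_apply, inner_sub_left]
      _ ≤ B' * (‖(W - W0) k‖ * cx) := by
          gcongr
          exact (abs_real_inner_le_norm _ _).trans (by gcongr)
      _ = cx * B' * ‖(W - W0) k‖ := by ring
  have hsum : |∑ k, a k * σ ⟪W k, x⟫_ℝ - ∑ k, a k * σ ⟪W0 k, x⟫_ℝ|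
      ≤ cx * B' * (√m * ‖W - W0‖) := by
    rw [← Finset.sum_sub_distrib]
    refine (Finset.abs_sum_le_sum_abs _ _).trans ((Finset.sum_le_sum fun k _ => hterm k).trans ?_)
    rw [← Finset.mul_sum]
    exact mul_le_mul_of_nonneg_left (by simpa using PiLp.sum_norm_le_sqrt_card_mul_norm (W - W0))
      (mul_nonneg hcx hB')
  have hscale : (m : ℝ) ^ (-c) * √m = 1 / (m : ℝ) ^ (c - 1 / 2) := by
    rw [one_div, ← Real.rpow_neg hm0.le, Real.sqrt_eq_rpow, ← Real.rpow_add hm0]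
    ring_nf
  rw [twoLayerNet, twoLayerNet, ← mul_sub, abs_mul, abs_of_nonneg (by positivity)]
  calc (m : ℝ) ^ (-c) * |∑ k, a k * σ ⟪W k, x⟫_ℝ - ∑ k, a k * σ ⟪W0 k, x⟫_ℝ|
      ≤ (m : ℝ) ^ (-c) * (cx * B' * (√m * ‖W - W0‖)) := by gcongr
    _ = cx * B' * ((m : ℝ) ^ (-c) * √m) * ‖W - W0‖ := by ring
    _ = cx * B' / (m : ℝ) ^ (c - 1 / 2) * ‖W - W0‖ := by rw [hscale]; ring

end TwoLayerNet

theorem two_layer_loss_hessian_lower_bound_general {d m : ℕ} (hm : 0 < m)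
    (c cx c0 B' B'' : ℝ)
    (σ : ℝ → ℝ) (hσsmooth : ContDiff ℝ 2 σ)
    (hσ' : ∀ t : ℝ, |deriv σ t| ≤ B')
    (hσ'' : ∀ t : ℝ, |deriv (deriv σ) t| ≤ B'')
    (a : Fin m → ℝ) (ha : ∀ k, a k = 1 ∨ a k = -1)
    (x : EuclideanSpace ℝ (Fin d)) (hx : ‖x‖ ≤ cx)
    (y : ℝ)
    (W0 : PiLp 2 (fun _ : Fin m => EuclideanSpace ℝ (Fin d)))
    (hW0 : (1 / 2) * ((m : ℝ) ^ (-c) * ∑ k, a k * σ ⟪W0 k, x⟫_ℝ - y) ^ 2 ≤ c0)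
    (W : PiLp 2 (fun _ : Fin m => EuclideanSpace ℝ (Fin d))) :
    ∀ v : PiLp 2 (fun _ : Fin m => EuclideanSpace ℝ (Fin d)),
      iteratedFDeriv ℝ 2
          (fun V : PiLp 2 (fun _ : Fin m => EuclideanSpace ℝ (Fin d)) =>
            (1 / 2) * ((m : ℝ) ^ (-c) * ∑ k, a k * σ ⟪V k, x⟫_ℝ - y) ^ 2) W ![v, v]
        ≥ -(cx ^ 3 * B' * B'' / (m : ℝ) ^ (2 * c - 1 / 2) * ‖W - W0‖
            + cx ^ 2 * B'' * Real.sqrt (2 * c0) / (m : ℝ) ^ c) * ‖v‖ ^ 2 := by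
  intro v
  set f := twoLayerNet c σ a x
  have ha1 (k : Fin m) : |a k| ≤ 1 := by rcases ha k with h | h <;> simp [h]
  have hresidual : |f W - y| ≤ cx * B' / (m : ℝ) ^ (c - 1 / 2) * ‖W - W0‖ + √(2 * c0) := by
    have hW0' : (1 / 2) * (f W0 - y) ^ 2 ≤ c0 := hW0
    have hW0y : |f W0 - y| ≤ √(2 * c0) := Real.abs_le_sqrt (by linarith)
    exact (abs_sub_le _ (f W0) _).trans (add_le_add
      (abs_twoLayerNet_sub_le hm (hσsmooth.differentiable two_ne_zero) ha1 hσ' hx W W0) hW0y)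
  have hcurvature : |iteratedFDeriv ℝ 2 f W ![v, v]| ≤ cx ^ 2 * B'' / (m : ℝ) ^ c * ‖v‖ ^ 2 :=
    abs_iteratedFDeriv_two_twoLayerNet_le hσsmooth ha1 hσ'' hx W v
  have hscale : (m : ℝ) ^ (c - 1 / 2) * (m : ℝ) ^ c = (m : ℝ) ^ (2 * c - 1 / 2) := by
    rw [← Real.rpow_add (by exact_mod_cast hm)]
    ring_nf
  change iteratedFDeriv ℝ 2 (fun V => (1 / 2) * (f V - y) ^ 2) W ![v, v] ≥ _
  rw [iteratedFDeriv_two_half_sq_sub_apply (contDiff_twoLayerNet hσsmooth), ← hscale]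
  calc fderiv ℝ f W v ^ 2 + (f W - y) * iteratedFDeriv ℝ 2 f W ![v, v]
      ≥ (f W - y) * iteratedFDeriv ℝ 2 f W ![v, v] := le_add_of_nonneg_left (sq_nonneg _)
    _ ≥ -(|f W - y| * |iteratedFDeriv ℝ 2 f W ![v, v]|) := by rw [← abs_mul]; exact neg_abs_le _
    _ ≥ -((cx * B' / (m : ℝ) ^ (c - 1 / 2) * ‖W - W0‖ + √(2 * c0))
          * (cx ^ 2 * B'' / (m : ℝ) ^ c * ‖v‖ ^ 2)) :=
      neg_le_neg (mul_le_mul hresidual hcurvature (abs_nonneg _)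
        ((abs_nonneg _).trans hresidual))
    _ = _ := by ring

/-- Weak convexity (curvature lower bound) for the square loss of a two-layer network:
the smallest eigenvalue of the Hessian of `W ↦ ½(f_W(x) - y)²` is at least
`-(c_x³ B_{σ'} B_{σ''} / m^{2c-1/2} ‖W - W_0‖_F + c_x² B_{σ''} √(2c_0) / m^c)`,
where `ℓ(W_0; z) ≤ c_0`, expressed via the Hessian quadratic form. -/
theorem two_layer_loss_hessian_lower_bound {d m : ℕ} (hm : 0 < m)
    (c cx c0 Bσ B' B'' : ℝ) (hc : c ∈ Set.Icc (1 / 2 : ℝ) 1)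
    (σ : ℝ → ℝ) (hσsmooth : ContDiff ℝ 2 σ)
    (hσ : ∀ t : ℝ, |σ t| ≤ Bσ) (hσ' : ∀ t : ℝ, |deriv σ t| ≤ B')
    (hσ'' : ∀ t : ℝ, |deriv (deriv σ) t| ≤ B'')
    (a : Fin m → ℝ) (ha : ∀ k, a k = 1 ∨ a k = -1)
    (x : EuclideanSpace ℝ (Fin d)) (hx : ‖x‖ ≤ cx)
    (y : ℝ)
    (W0 : PiLp 2 (fun _ : Fin m => EuclideanSpace ℝ (Fin d)))
    (hW0 : (1 / 2) * ((m : ℝ) ^ (-c) * ∑ k, a k * σ ⟪W0 k, x⟫_ℝ - y) ^ 2 ≤ c0)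
    (W : PiLp 2 (fun _ : Fin m => EuclideanSpace ℝ (Fin d))) :
    ∀ v : PiLp 2 (fun _ : Fin m => EuclideanSpace ℝ (Fin d)),
      iteratedFDeriv ℝ 2
          (fun V : PiLp 2 (fun _ : Fin m => EuclideanSpace ℝ (Fin d)) =>
            (1 / 2) * ((m : ℝ) ^ (-c) * ∑ k, a k * σ ⟪V k, x⟫_ℝ - y) ^ 2) W ![v, v]
        ≥ -(cx ^ 3 * B' * B'' / (m : ℝ) ^ (2 * c - 1 / 2) * ‖W - W0‖
            + cx ^ 2 * B'' * Real.sqrt (2 * c0) / (m : ℝ) ^ c) * ‖v‖ ^ 2 :=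
  two_layer_loss_hessian_lower_bound_general hm c cx c0 B' B'' σ hσsmooth hσ' hσ'' a ha x hx y W0
    hW0 W
end
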